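/- arXiv:2112.07186 — 7 statements merged into one kernel-verified Lean document; each statement's English description precedes it below -/
import Mathlib

section
/- Let T be a space of pairs ω = (ω⁰, ω¹) of functions satisfying the BMS twistor equations ð'ω⁰ = 0, þ'ω⁰ = 0, þ'ω¹ = ðω⁰. For ξ = (β, X, X̃) ∈ bms_ℂ define the Lie derivative L_ξ ω = (ω̃⁰, ω̃¹) by ω̃⁰ = Xðω⁰ − ½ω⁰ðX and ω̃¹ = βðω⁰ − ω⁰ðβ + Xðω¹ + X̃ð'ω¹ − ½ω¹ð'X̃. Then L_ξ ω again satisfies the BMS twistor equations, i.e. ð'ω̃⁰ = 0, þ'ω̃⁰ = 0, þ'ω̃¹ = ðω̃⁰. -/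
/-- The space of BMS twistors `(ω⁰, ω¹)` (solutions of
`ð'ω⁰ = 0`, `þ'ω⁰ = 0`, `þ'ω¹ = ðω⁰`) is preserved by the Lie derivative along
any complexified BMS vector field `(β, X, X̃)`. -/
theorem bms_twistor_space_invariant
    (A : Type*) [CommRing A] [Algebra ℂ A]
    (eth ethp thorn : A →ₗ[ℂ] A) (R : A)
    -- ð, ð', þ' are derivations
    (heth : ∀ a b : A, eth (a * b) = eth a * b + a * eth b)
    (hethp : ∀ a b : A, ethp (a * b) = ethp a * b + a * ethp b)
    (hthorn : ∀ a b : A, thorn (a * b) = thorn a * b + a * thorn b)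
    -- GHP commutators: [þ', ð] = [þ', ð'] = 0 and [ð, ð']η = −sRη on spin-s functions
    (hTe : ∀ a : A, thorn (eth a) = eth (thorn a))
    (hTep : ∀ a : A, thorn (ethp a) = ethp (thorn a))
    (Spin : ℚ → A → Prop)
    (hSmul : ∀ (s t : ℚ) (a b : A), Spin s a → Spin t b → Spin (s + t) (a * b))
    (hSeth : ∀ (s : ℚ) (a : A), Spin s a → Spin (s + 1) (eth a))
    (hSethp : ∀ (s : ℚ) (a : A), Spin s a → Spin (s - 1) (ethp a))
    (hSthorn : ∀ (s : ℚ) (a : A), Spin s a → Spin s (thorn a))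
    (hComm : ∀ (s : ℚ) (a : A), Spin s a →
      eth (ethp a) - ethp (eth a) = -((s : ℂ) • (R * a)))
    (hRSpin : Spin 0 R)
    -- the BMS vector field (β, X, X̃)
    (β X Xt : A)
    (hβs : Spin 0 β) (hXs : Spin (-1) X) (hXts : Spin 1 Xt)
    (hβ : thorn β = (1/2 : ℂ) • (eth X + ethp Xt))
    (hX1 : thorn X = 0) (hX2 : ethp X = 0)
    (hXt1 : thorn Xt = 0) (hXt2 : eth Xt = 0)
    -- the BMS twistor (ω⁰, ω¹)
    (ω0 ω1 : A)
    (hω0s : Spin (-(1/2)) ω0) (hω1s : Spin (1/2) ω1)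
    (h1 : ethp ω0 = 0) (h2 : thorn ω0 = 0) (h3 : thorn ω1 = eth ω0) :
    -- the Lie-derived twistor
    ethp (X * eth ω0 - (1/2 : ℂ) • (ω0 * eth X)) = 0 ∧
    thorn (X * eth ω0 - (1/2 : ℂ) • (ω0 * eth X)) = 0 ∧
    thorn (β * eth ω0 - ω0 * eth β + X * eth ω1 + Xt * ethp ω1
        - (1/2 : ℂ) • (ω1 * ethp Xt))
      = eth (X * eth ω0 - (1/2 : ℂ) • (ω0 * eth X)) := by
  -- key curvature facts
  have k0 : ethp (eth ω0) = (-(1/2) : ℂ) • (R * ω0) := by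
    have h := hComm (-(1/2)) ω0 hω0s
    rw [h1, map_zero, zero_sub] at h
    push_cast at h
    exact neg_injective h
  have kX : ethp (eth X) = (-1 : ℂ) • (R * X) := by
    have h := hComm (-1) X hXs
    rw [hX2, map_zero, zero_sub] at h
    push_cast at h
    exact neg_injective h
  have kXt : eth (ethp Xt) = -((1 : ℂ) • (R * Xt)) := by
    have h := hComm 1 Xt hXts
    rw [hXt2, map_zero, sub_zero] at h
    push_cast at h
    exact h
  refine ⟨?_, ?_, ?_⟩
  · rw [map_sub, map_smul, hethp X (eth ω0), hethp ω0 (eth X), h1, hX2, k0, kX]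
    simp only [smul_smul, mul_smul_comm, smul_mul_assoc, zero_mul, mul_neg,
      smul_neg, neg_smul]
    rw [show X * (R * ω0) = ω0 * (R * X) by ring]
    module
  · simp only [map_sub, map_smul, hthorn, hTe, h2, hX1, map_zero, mul_zero,
      zero_mul, add_zero, zero_add, smul_zero, sub_zero, sub_self]
  · simp only [map_sub, map_add, map_smul, hthorn, heth, hTe, hTep,
      h2, h3, hX1, hX2, hXt1, hβ, map_zero, map_add, k0, kXt,
      smul_add, mul_zero, zero_mul, add_zero, zero_add, sub_zero]
    simp only [smul_smul, mul_smul_comm, smul_mul_assoc, smul_add, add_mul,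
      mul_add, mul_neg, smul_neg, neg_smul, one_smul]
    rw [show ω0 * (R * Xt) = Xt * (R * ω0) by ring,
      show ethp Xt * eth ω0 = eth ω0 * ethp Xt by ring,
      show eth X * eth ω0 = eth ω0 * eth X by ring]
    module
end

section
/- Let ω = (ω⁰, ω¹) and ω̃ = (ω̃⁰, ω̃¹) be two solutions of the BMS twistor equations ð'ω⁰ = þ'ω⁰ = 0, þ'ω¹ = ðω⁰ (and similarly for ω̃). Then the pair (β, X) defined by β = −i(ω⁰ω̃¹ + ω¹ω̃⁰) and X = −2i ω⁰ω̃⁰ satisfies the conditions of a self-dual BMS vector field: þ'X = ð'X = 0 and þ'β = ½ðX. -/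
/-- Given two BMS twistors `ω = (ω⁰, ω¹)` and `ω̃ = (ω̃⁰, ω̃¹)`,
the pair `β = −i(ω⁰ω̃¹ + ω¹ω̃⁰)`, `X = −2i ω⁰ω̃⁰` satisfies the equations of a
self-dual BMS vector field: `þ'X = ð'X = 0` and `þ'β = ½ðX`. -/
theorem bms_twistors_give_selfdual_vector
    (A : Type*) [CommRing A] [Algebra ℂ A]
    (eth ethp thorn : A →ₗ[ℂ] A)
    (heth : ∀ a b : A, eth (a * b) = eth a * b + a * eth b)
    (hethp : ∀ a b : A, ethp (a * b) = ethp a * b + a * ethp b)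
    (hthorn : ∀ a b : A, thorn (a * b) = thorn a * b + a * thorn b)
    -- the two BMS twistors
    (ω0 ω1 ωt0 ωt1 : A)
    (h1 : ethp ω0 = 0) (h2 : thorn ω0 = 0) (h3 : thorn ω1 = eth ω0)
    (ht1 : ethp ωt0 = 0) (ht2 : thorn ωt0 = 0) (ht3 : thorn ωt1 = eth ωt0) :
    -- β = −i(ω⁰ω̃¹ + ω¹ω̃⁰),  X = −2i ω⁰ω̃⁰
    thorn ((-(2 : ℂ) * Complex.I) • (ω0 * ωt0)) = 0 ∧
    ethp ((-(2 : ℂ) * Complex.I) • (ω0 * ωt0)) = 0 ∧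
    thorn ((-Complex.I) • (ω0 * ωt1 + ω1 * ωt0))
      = (1/2 : ℂ) • eth ((-(2 : ℂ) * Complex.I) • (ω0 * ωt0)) := by
  refine ⟨?_, ?_, ?_⟩
  · rw [map_smul, hthorn, h2, ht2]; simp
  · rw [map_smul, hethp, h1, ht1]; simp
  · rw [map_smul, map_add, hthorn, hthorn, h2, ht2, h3, ht3,
      map_smul, heth, smul_smul]
    ring_nf
end

section
/- With the brackets of the BMS superalgebra K = bms₊ ⊕ T (even-even: BMS bracket; odd-odd: [ω₁, ω₂] = (−i(ω₁⁰ω₂¹ + ω₁¹ω₂⁰), −2iω₁⁰ω₂⁰); even-odd: Lie derivative L_ξω = (Xðω⁰ − ½ω⁰ðX, βðω⁰ − ω⁰ðβ + Xðω¹)), the fully odd Jacobi identity holds: [ω₁, [ω₂, ω₃]] + [ω₂, [ω₃, ω₁]] + [ω₃, [ω₁, ω₂]] = 0 for all BMS twistors ω₁, ω₂, ω₃, where [ωᵢ, [ωⱼ, ωₖ]] denotes −L_{[ωⱼ,ωₖ]}ωᵢ. -/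
/-- Bracket of two self-dual BMS vector fields `ξ = (β, X)`. -/
def sdBracket {A : Type*} [CommRing A] [Algebra ℂ A]
    (eth : A →ₗ[ℂ] A) (ξ₁ ξ₂ : A × A) : A × A :=
  ⟨ξ₁.1 * eth ξ₂.2 - ξ₂.2 * eth ξ₁.1 - ξ₂.1 * eth ξ₁.2 + ξ₁.2 * eth ξ₂.1,
    ξ₁.2 * eth ξ₂.2 - ξ₂.2 * eth ξ₁.2⟩

/-- Symmetric bracket of two BMS twistors `ω = (ω⁰, ω¹)`, a self-dual BMS vector field. -/
def twBracket {A : Type*} [CommRing A] [Algebra ℂ A] (ω₁ ω₂ : A × A) : A × A :=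
  ⟨(-Complex.I) • (ω₁.1 * ω₂.2 + ω₁.2 * ω₂.1),
    (-(2 : ℂ) * Complex.I) • (ω₁.1 * ω₂.1)⟩

/-- Lie derivative of a BMS twistor `ω = (ω⁰, ω¹)` along a self-dual BMS vector
field `ξ = (β, X)`. -/
noncomputable def lieDeriv {A : Type*} [CommRing A] [Algebra ℂ A]
    (eth : A →ₗ[ℂ] A) (ξ ω : A × A) : A × A :=
  ⟨ξ.2 * eth ω.1 - (1/2 : ℂ) • (ω.1 * eth ξ.2),
    ξ.1 * eth ω.1 - ω.1 * eth ξ.1 + ξ.2 * eth ω.2⟩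

/-- Membership in `bms₊`: `þ'X = ð'X = 0`, `þ'β = ½ðX`. -/
def isSD {A : Type*} [CommRing A] [Algebra ℂ A]
    (eth ethp thorn : A →ₗ[ℂ] A) (ξ : A × A) : Prop :=
  thorn ξ.2 = 0 ∧ ethp ξ.2 = 0 ∧ thorn ξ.1 = (1/2 : ℂ) • eth ξ.2

/-- Membership in the BMS twistor space `T`: `ð'ω⁰ = þ'ω⁰ = 0`, `þ'ω¹ = ðω⁰`. -/
def isTw {A : Type*} [CommRing A] [Algebra ℂ A]
    (eth ethp thorn : A →ₗ[ℂ] A) (ω : A × A) : Prop :=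
  ethp ω.1 = 0 ∧ thorn ω.1 = 0 ∧ thorn ω.2 = eth ω.1

/-- the fully odd graded Jacobi identity of the BMS superalgebra
`K = bms₊ ⊕ T`: `[ω₁, [ω₂, ω₃]] + [ω₂, [ω₃, ω₁]] + [ω₃, [ω₁, ω₂]] = 0`, where
`[ωᵢ, [ωⱼ, ωₖ]] = −L_{[ωⱼ,ωₖ]} ωᵢ`. -/
theorem bms_superalgebra_odd_odd_odd_jacobi
    (A : Type*) [CommRing A] [Algebra ℂ A]
    (eth ethp thorn : A →ₗ[ℂ] A)
    (heth : ∀ a b : A, eth (a * b) = eth a * b + a * eth b)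
    (hethp : ∀ a b : A, ethp (a * b) = ethp a * b + a * ethp b)
    (hthorn : ∀ a b : A, thorn (a * b) = thorn a * b + a * thorn b)
    (hTe : ∀ a : A, thorn (eth a) = eth (thorn a))
    (hTep : ∀ a : A, thorn (ethp a) = ethp (thorn a))
    (ω₁ ω₂ ω₃ : A × A)
    (hω₁ : isTw eth ethp thorn ω₁) (hω₂ : isTw eth ethp thorn ω₂)
    (hω₃ : isTw eth ethp thorn ω₃) :
    -(lieDeriv eth (twBracket ω₂ ω₃) ω₁) + -(lieDeriv eth (twBracket ω₃ ω₁) ω₂)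
      + -(lieDeriv eth (twBracket ω₁ ω₂) ω₃) = 0 := by
  have hh : algebraMap ℂ A (1 / 2) * 2 = 1 := by
    rw [← map_ofNat (algebraMap ℂ A) 2, ← map_mul]
    norm_num
  ext <;>
    simp only [lieDeriv, twBracket, Prod.fst_add, Prod.snd_add, Prod.fst_neg, Prod.snd_neg,
      Prod.fst_zero, Prod.snd_zero, smul_mul_assoc, mul_smul_comm, map_smul, heth,
      map_add, map_neg, smul_add, mul_add, add_mul, neg_mul, mul_neg, neg_add,
      mul_smul_comm, smul_mul_assoc, smul_smul, neg_smul, neg_neg, smul_neg] <;>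
    simp only [Algebra.smul_def, map_mul, map_ofNat]
  · linear_combination (-(2 : A) * algebraMap ℂ A Complex.I *
      (ω₁.1 * eth ω₂.1 * ω₃.1 + ω₁.1 * ω₂.1 * eth ω₃.1 + ω₃.1 * ω₂.1 * eth ω₁.1)) * hh
  · ring
end

section
/- Consider the vector space spanned by functions X of spin −1 with ð'X = 0 (even part) and functions ω⁰ of spin −½ with ð'ω⁰ = 0 (odd part) on the 2-sphere, with brackets [X₁, X₂] = X₁ðX₂ − X₂ðX₁, [X, ω⁰] = Xðω⁰ − ½ω⁰ðX, [ω₁⁰, ω₂⁰] = −2i ω₁⁰ω₂⁰. Then these brackets satisfy all four graded Jacobi identities, making this a Lie superalgebra. -/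
/-- On the 2-sphere, the space spanned by spin −1 functions `X` with
`ð'X = 0` (even part) and spin −½ functions `ω⁰` with `ð'ω⁰ = 0` (odd part), with
brackets `[X₁, X₂] = X₁ðX₂ − X₂ðX₁`, `[X, ω⁰] = Xðω⁰ − ½ω⁰ðX`,
`[ω₁⁰, ω₂⁰] = −2i ω₁⁰ω₂⁰`, satisfies all four graded Jacobi identities,
so it is a Lie superalgebra. -/
theorem sphere_superalgebra_jacobi
    (A : Type*) [CommRing A] [Algebra ℂ A]
    (eth ethp : A →ₗ[ℂ] A) (R : A)
    (heth : ∀ a b : A, eth (a * b) = eth a * b + a * eth b)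
    (hethp : ∀ a b : A, ethp (a * b) = ethp a * b + a * ethp b)
    (Spin : ℚ → A → Prop)
    (hSmul : ∀ (s t : ℚ) (a b : A), Spin s a → Spin t b → Spin (s + t) (a * b))
    (hSeth : ∀ (s : ℚ) (a : A), Spin s a → Spin (s + 1) (eth a))
    (hSethp : ∀ (s : ℚ) (a : A), Spin s a → Spin (s - 1) (ethp a))
    (hComm : ∀ (s : ℚ) (a : A), Spin s a →
      eth (ethp a) - ethp (eth a) = -((s : ℂ) • (R * a)))
    (hRSpin : Spin 0 R)
    -- the even and odd parts
    (isEven : A → Prop) (isOdd : A → Prop)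
    (hE : ∀ X, isEven X ↔ Spin (-1) X ∧ ethp X = 0)
    (hO : ∀ ω, isOdd ω ↔ Spin (-(1/2)) ω ∧ ethp ω = 0) :
    -- even–even–even
    (∀ X₁ X₂ X₃ : A, isEven X₁ → isEven X₂ → isEven X₃ →
      (X₁ * eth (X₂ * eth X₃ - X₃ * eth X₂) - (X₂ * eth X₃ - X₃ * eth X₂) * eth X₁)
      + (X₂ * eth (X₃ * eth X₁ - X₁ * eth X₃) - (X₃ * eth X₁ - X₁ * eth X₃) * eth X₂)
      + (X₃ * eth (X₁ * eth X₂ - X₂ * eth X₁) - (X₁ * eth X₂ - X₂ * eth X₁) * eth X₃)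
        = 0) ∧
    -- even–even–odd
    (∀ X₁ X₂ ω : A, isEven X₁ → isEven X₂ → isOdd ω →
      (X₁ * eth (X₂ * eth ω - (1/2 : ℂ) • (ω * eth X₂))
        - (1/2 : ℂ) • ((X₂ * eth ω - (1/2 : ℂ) • (ω * eth X₂)) * eth X₁))
      - (X₂ * eth (X₁ * eth ω - (1/2 : ℂ) • (ω * eth X₁))
        - (1/2 : ℂ) • ((X₁ * eth ω - (1/2 : ℂ) • (ω * eth X₁)) * eth X₂))
      - ((X₁ * eth X₂ - X₂ * eth X₁) * eth ω
        - (1/2 : ℂ) • (ω * eth (X₁ * eth X₂ - X₂ * eth X₁))) = 0) ∧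
    -- odd–odd–even
    (∀ X ω₁ ω₂ : A, isEven X → isOdd ω₁ → isOdd ω₂ →
      (-(2 : ℂ) * Complex.I) • (ω₁ * (-(X * eth ω₂ - (1/2 : ℂ) • (ω₂ * eth X))))
      - (-(2 : ℂ) * Complex.I) • (ω₂ * (X * eth ω₁ - (1/2 : ℂ) • (ω₁ * eth X)))
      + (X * eth ((-(2 : ℂ) * Complex.I) • (ω₁ * ω₂))
        - ((-(2 : ℂ) * Complex.I) • (ω₁ * ω₂)) * eth X) = 0) ∧
    -- odd–odd–odd
    (∀ ω₁ ω₂ ω₃ : A, isOdd ω₁ → isOdd ω₂ → isOdd ω₃ →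
      (((-(2 : ℂ) * Complex.I) • (ω₂ * ω₃)) * eth ω₁
        - (1/2 : ℂ) • (ω₁ * eth ((-(2 : ℂ) * Complex.I) • (ω₂ * ω₃))))
      + (((-(2 : ℂ) * Complex.I) • (ω₃ * ω₁)) * eth ω₂
        - (1/2 : ℂ) • (ω₂ * eth ((-(2 : ℂ) * Complex.I) • (ω₃ * ω₁))))
      + (((-(2 : ℂ) * Complex.I) • (ω₁ * ω₂)) * eth ω₃
        - (1/2 : ℂ) • (ω₃ * eth ((-(2 : ℂ) * Complex.I) • (ω₁ * ω₂)))) = 0) := by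
  have h2 : (algebraMap ℂ A) (1/2 : ℂ) * 2 = 1 := by
    rw [← map_ofNat (algebraMap ℂ A) 2, ← map_mul]
    norm_num
  refine ⟨?_, ?_, ?_, ?_⟩
  · intro X₁ X₂ X₃ _ _ _
    simp only [map_sub, LinearMap.map_smul, heth]
    ring
  · intro X₁ X₂ ω _ _ _
    simp only [map_sub, LinearMap.map_smul, heth]
    simp only [Algebra.smul_def, map_neg, map_mul, map_ofNat]
    ring
  · intro X ω₁ ω₂ _ _ _
    simp only [map_sub, LinearMap.map_smul, heth]
    simp only [Algebra.smul_def, map_neg, map_mul, map_ofNat]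
    linear_combination (-2 * (algebraMap ℂ A Complex.I) * ω₁ * ω₂ * eth X) * h2
  · intro ω₁ ω₂ ω₃ _ _ _
    simp only [map_sub, LinearMap.map_smul, heth]
    simp only [Algebra.smul_def, map_neg, map_mul, map_ofNat]
    linear_combination (2 * (algebraMap ℂ A Complex.I) * (ω₂ * ω₃ * eth ω₁ + ω₃ * ω₁ * eth ω₂ + ω₁ * ω₂ * eth ω₃)) * h2
end

section
/- Let þ', ð, ð' be operators on spin-weighted functions with [þ', ð] = [þ', ð'] = 0 and [ð, ð']η = −sRη for η of spin s. Suppose ω⁰ has spin −½ and satisfies ð'ω⁰ = 0, and X has spin −1 and satisfies ð'X = 0. Then ð'(Xðω⁰ − ½ω⁰ðX) = 0, i.e. the transformed ω̃⁰ = Xðω⁰ − ½ω⁰ðX again satisfies ð'ω̃⁰ = 0. -/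
/-- If `ω⁰` has spin −½ with `ð'ω⁰ = 0` and `X` has spin −1 with
`ð'X = 0`, then `ð'(Xðω⁰ − ½ω⁰ðX) = 0`, using `[ð, ð']η = −sRη`. -/
theorem ethp_transformed_omega0_vanishes
    (A : Type*) [CommRing A] [Algebra ℂ A]
    (eth ethp thorn : A →ₗ[ℂ] A) (R : A)
    (heth : ∀ a b : A, eth (a * b) = eth a * b + a * eth b)
    (hethp : ∀ a b : A, ethp (a * b) = ethp a * b + a * ethp b)
    (hthorn : ∀ a b : A, thorn (a * b) = thorn a * b + a * thorn b)
    (hTe : ∀ a : A, thorn (eth a) = eth (thorn a))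
    (hTep : ∀ a : A, thorn (ethp a) = ethp (thorn a))
    (Spin : ℚ → A → Prop)
    (hSmul : ∀ (s t : ℚ) (a b : A), Spin s a → Spin t b → Spin (s + t) (a * b))
    (hSeth : ∀ (s : ℚ) (a : A), Spin s a → Spin (s + 1) (eth a))
    (hSethp : ∀ (s : ℚ) (a : A), Spin s a → Spin (s - 1) (ethp a))
    (hSthorn : ∀ (s : ℚ) (a : A), Spin s a → Spin s (thorn a))
    (hComm : ∀ (s : ℚ) (a : A), Spin s a →
      eth (ethp a) - ethp (eth a) = -((s : ℂ) • (R * a)))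
    (hRSpin : Spin 0 R)
    (ω0 X : A)
    (hω0s : Spin (-(1/2)) ω0) (hω0 : ethp ω0 = 0)
    (hXs : Spin (-1) X) (hX : ethp X = 0) :
    ethp (X * eth ω0 - (1/2 : ℂ) • (ω0 * eth X)) = 0 := by
  have h1 : ethp (eth ω0) = (-(1/2) : ℂ) • (R * ω0) := by
    have h := hComm (-(1/2)) ω0 hω0s
    rw [hω0, map_zero, zero_sub] at h
    have h' := neg_injective h
    rw [h']; norm_num
  have h2 : ethp (eth X) = -(R * X) := by
    have h := hComm (-1) X hXs
    rw [hX, map_zero, zero_sub] at h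
    have h' := neg_injective h
    rw [h']; push_cast; rw [neg_one_smul]
  rw [map_sub, map_smul, hethp, hethp, hX, hω0, h1, h2]
  simp only [Algebra.smul_def, mul_neg]
  rw [map_neg]; ring
end

section
/- Let þ', ð, ð' be GHP operators at null infinity with [þ', ð] = [þ', ð'] = 0 and [ð, ð']η = −sRη for spin-s η, Leibniz over products. Let (β, X, X̃) satisfy þ'β = ½(ðX + ð'X̃), þ'X = ð'X = 0, þ'X̃ = ðX̃ = 0, and let (ω⁰, ω¹) satisfy ð'ω⁰ = þ'ω⁰ = 0 and þ'ω¹ = ðω⁰. Set ω̃¹ = βðω⁰ − ω⁰ðβ + Xðω¹ + X̃ð'ω¹ − ½ω¹ð'X̃ and ω̃⁰ = Xðω⁰ − ½ω⁰ðX. Then þ'ω̃¹ = ðω̃⁰. -/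
/-- For a general complex BMS vector field `(β, X, X̃)` and a BMS
twistor `(ω⁰, ω¹)`, the Lie-derived twistor satisfies the third BMS twistor
equation: `þ'ω̃¹ = ðω̃⁰`, where `ω̃⁰ = Xðω⁰ − ½ω⁰ðX` and
`ω̃¹ = βðω⁰ − ω⁰ðβ + Xðω¹ + X̃ð'ω¹ − ½ω¹ð'X̃`. -/
theorem thorn_lie_derived_omega1
    (A : Type*) [CommRing A] [Algebra ℂ A]
    (eth ethp thorn : A →ₗ[ℂ] A) (R : A)
    (heth : ∀ a b : A, eth (a * b) = eth a * b + a * eth b)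
    (hethp : ∀ a b : A, ethp (a * b) = ethp a * b + a * ethp b)
    (hthorn : ∀ a b : A, thorn (a * b) = thorn a * b + a * thorn b)
    (hTe : ∀ a : A, thorn (eth a) = eth (thorn a))
    (hTep : ∀ a : A, thorn (ethp a) = ethp (thorn a))
    (Spin : ℚ → A → Prop)
    (hSmul : ∀ (s t : ℚ) (a b : A), Spin s a → Spin t b → Spin (s + t) (a * b))
    (hSeth : ∀ (s : ℚ) (a : A), Spin s a → Spin (s + 1) (eth a))
    (hSethp : ∀ (s : ℚ) (a : A), Spin s a → Spin (s - 1) (ethp a))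
    (hSthorn : ∀ (s : ℚ) (a : A), Spin s a → Spin s (thorn a))
    (hComm : ∀ (s : ℚ) (a : A), Spin s a →
      eth (ethp a) - ethp (eth a) = -((s : ℂ) • (R * a)))
    (hRSpin : Spin 0 R) (hRthorn : thorn R = 0)
    (β X Xt ω0 ω1 : A)
    (hβs : Spin 0 β) (hXs : Spin (-1) X) (hXts : Spin 1 Xt)
    (hω0s : Spin (-(1/2)) ω0) (hω1s : Spin (1/2) ω1)
    (hβ : thorn β = (1/2 : ℂ) • (eth X + ethp Xt))
    (hX1 : thorn X = 0) (hX2 : ethp X = 0)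
    (hXt1 : thorn Xt = 0) (hXt2 : eth Xt = 0)
    (h1 : ethp ω0 = 0) (h2 : thorn ω0 = 0) (h3 : thorn ω1 = eth ω0) :
    thorn (β * eth ω0 - ω0 * eth β + X * eth ω1 + Xt * ethp ω1
        - (1/2 : ℂ) • (ω1 * ethp Xt))
      = eth (X * eth ω0 - (1/2 : ℂ) • (ω0 * eth X)) := by
  have e1 : thorn (eth ω0) = 0 := by rw [hTe, h2, map_zero]
  have e2 : thorn (eth ω1) = eth (eth ω0) := by rw [hTe, h3]
  have e2' : thorn (ethp ω1) = ethp (eth ω0) := by rw [hTep, h3]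
  have e3 : thorn (ethp Xt) = 0 := by rw [hTep, hXt1, map_zero]
  have f1 : ethp (eth ω0) = -((1/2 : ℂ) • (R * ω0)) := by
    have h := hComm (-(1/2)) ω0 hω0s
    rw [h1, map_zero, zero_sub, neg_eq_iff_eq_neg] at h
    rw [h]; push_cast; module
  have f2 : eth (ethp Xt) = -((1 : ℂ) • (R * Xt)) := by
    have h := hComm 1 Xt hXts
    rw [hXt2, map_zero, sub_zero] at h
    simpa using h
  simp only [map_sub, map_add, map_smul, hthorn, heth, e1, e2, e2', e3, hX1, hXt1,
    h2, h3, hβ, hTe, f1, f2, mul_zero, zero_mul, add_zero, zero_add]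
  simp only [Algebra.smul_def, map_one, one_mul]
  have half : (algebraMap ℂ A) (1/2) + (algebraMap ℂ A) (1/2) = 1 := by
    rw [← map_add, ← map_one (algebraMap ℂ A)]; norm_num
  linear_combination half * (eth X * eth ω0)
end

section
/- For the symmetric bracket on BMS twistors [ω₂, ω₃] = (β, X) with β = −i(ω₂⁰ω₃¹ + ω₂¹ω₃⁰), X = −2iω₂⁰ω₃⁰, and the action of a self-dual BMS vector field (β, X) on a twistor ω₁ given by L_ξω₁ = (Xðω₁⁰ − ½ω₁⁰ðX, Xðω₁¹ + βðω₁⁰ − ω₁⁰ðβ), the cyclic sum L_{[ω₂,ω₃]}ω₁ + L_{[ω₃,ω₁]}ω₂ + L_{[ω₁,ω₂]}ω₃ = 0 vanishes identically, as an algebraic identity requiring only the Leibniz rule for ð. -/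
/-- For pairs `ωᵢ = (ωᵢ⁰, ωᵢ¹)` of elements of a commutative ring
with a derivation `ð`, with the symmetric bracket
`[ω₂, ω₃] = (β, X) = (−i(ω₂⁰ω₃¹ + ω₂¹ω₃⁰), −2iω₂⁰ω₃⁰)` and the action
`L_{(β,X)}ω = (Xðω⁰ − ½ω⁰ðX, Xðω¹ + βðω⁰ − ω⁰ðβ)`, the cyclic sum
`L_{[ω₂,ω₃]}ω₁ + L_{[ω₃,ω₁]}ω₂ + L_{[ω₁,ω₂]}ω₃ = 0` vanishes identically,
using only the Leibniz rule for `ð`. -/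
theorem cyclic_lie_derivative_vanishes
    (A : Type*) [CommRing A] [Algebra ℂ A]
    (eth : A →ₗ[ℂ] A)
    (heth : ∀ a b : A, eth (a * b) = eth a * b + a * eth b)
    (ω₁ ω₂ ω₃ : A × A) :
    (let br : A × A → A × A → A × A := fun ω ω' =>
      ⟨(-Complex.I) • (ω.1 * ω'.2 + ω.2 * ω'.1), (-(2 : ℂ) * Complex.I) • (ω.1 * ω'.1)⟩
     let L : A × A → A × A → A × A := fun ξ ω =>
      ⟨ξ.2 * eth ω.1 - (1/2 : ℂ) • (ω.1 * eth ξ.2),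
        ξ.2 * eth ω.2 + ξ.1 * eth ω.1 - ω.1 * eth ξ.1⟩
     L (br ω₂ ω₃) ω₁ + L (br ω₃ ω₁) ω₂ + L (br ω₁ ω₂) ω₃) = 0 := by

  simp only [Prod.ext_iff, Prod.fst_add, Prod.snd_add, Prod.fst_zero, Prod.snd_zero,
    map_add, map_smul, smul_add, heth, mul_add, add_mul, smul_mul_assoc, mul_smul_comm,
    smul_smul]
  constructor <;> · ring_nf; simp only [mul_two, smul_add]; module
end
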